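/- Let p ∈ (1,2) and a > 0, let f = f(·,a) be the unique solution of (|f'|^{p-2} f')' + f - |f'|^{p-1} = 0 on (0,∞) with f(0) = a, f'(0) = 0, and let R(a) := inf{r > 0 : f(r) = 0}. Then f(r,a) → 0 as r → R(a), so that f(·,a) is a decreasing bijection from [0,R(a)) onto (0,a], and the function ψ = ψ(·,a) : [0,1) → [0,∞) defined by ψ(1 - f(r,a)/a) := |f'(r,a)|^p / a^p for r ∈ [0,R(a)) is well defined, continuously differentiable on [0,1), positive on (0,1), and satisfies ψ(0) = 0 and ψ'(y) + (p/(p-1)) ψ(y)^{(p-1)/p} = (p a^{2-p}/(p-1))(1-y) for all y ∈ (0,1); in particular ψ'(0) = p a^{2-p}/(p-1) > 0. -/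

import Mathlib

open Set Filter Topology

/-- The extinction "radius" `R = inf{r > 0 : f(r) = 0}`, as an extended real number
(`⊤` when `f` does not vanish on `(0,∞)`). -/
noncomputable def extTime (f : ℝ → ℝ) : EReal :=
  sInf {x : EReal | ∃ r : ℝ, 0 < r ∧ f r = 0 ∧ x = (r : EReal)}

/-- `f` solves `(|f'|^{p-2} f')' + f - |f'|^{p-1} = 0` on `(0,∞)` with `f(0)=a`, `f'(0)=0`;
`fd` is the derivative of `f` and `gd` the derivative of `|f'|^{p-2} f'`, both continuous
on `[0,∞)`, so that `f ∈ C¹([0,∞))` and `|f'|^{p-2} f' ∈ C¹([0,∞))`. -/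
def IsSol (p a : ℝ) (f fd gd : ℝ → ℝ) : Prop :=
  (∀ r ∈ Set.Ici (0:ℝ), HasDerivWithinAt f (fd r) (Set.Ici 0) r) ∧
  ContinuousOn fd (Set.Ici 0) ∧
  (∀ r ∈ Set.Ici (0:ℝ), HasDerivWithinAt (fun s => |fd s| ^ (p-2) * fd s) (gd r) (Set.Ici 0) r) ∧
  ContinuousOn gd (Set.Ici 0) ∧
  (∀ r ∈ Set.Ioi (0:ℝ), gd r + f r - |fd r| ^ (p-1) = 0) ∧
  f 0 = a ∧ fd 0 = 0

/-!
On `[0, R)` the solution stays positive, and `f' < 0` there: `φ_p(f') = |f'|^{p-2} f'` has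
derivative `-a` at `0`, and derivative `-f < 0` at any later zero of `f'`, so it can never climb
back to `0`. If `R < ∞`, `f(R) = 0` by continuity; if `R = ∞` and `f` decreased to a limit `L > 0`,
then `(φ_p(f'))' + φ_p(f') = -f ≤ -L` would force `φ_p(f') ≤ -L/2` eventually, and `f` would
decrease linearly. So `f` is a decreasing bijection from `[0, R)` onto `(0, a]`, and the inverse
`r(y)` of `y = 1 - f(r)/a` is continuous, and differentiable on `(0, 1)`. Writing `|f'|^p` as
`|φ_p(f')|^{p/(p-1)}`, the chain rule and the equation give the equation for `ψ` on `(0, 1)`; at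
`y = 0`, where `r(y)` is not differentiable, `ψ` is differentiable because `ψ'` extends
continuously.
-/

section MonotoneContinuity

variable {α β : Type*} [LinearOrder α] [TopologicalSpace α] [OrderTopology α]
  [LinearOrder β] [TopologicalSpace β] [OrderTopology β]

theorem StrictMonoOn.continuousOn_of_image_ordConnected [DenselyOrdered β] {g : α → β} {s : Set α}
    (hs : s.OrdConnected) (hg : StrictMonoOn g s) (himg : (g '' s).OrdConnected) :
    ContinuousOn g s := by
  intro y hy
  have right : ContinuousWithinAt g (s ∩ Ici y) y := by
    by_cases h : ∃ z ∈ s, y < z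
    · obtain ⟨z, hz, hyz⟩ := h
      refine (hg.continuousWithinAt_right_of_image_mem_nhdsWithin
        (mem_of_superset (Icc_mem_nhdsGE hyz) (hs.out hy hz)) ?_).mono inter_subset_right
      exact mem_of_superset (Icc_mem_nhdsGE (hg hy hz hyz))
        (himg.out (mem_image_of_mem g hy) (mem_image_of_mem g hz))
    · push Not at h
      exact continuousWithinAt_singleton.mono fun z hz => le_antisymm (h z hz.1) hz.2
  have left : ContinuousWithinAt g (s ∩ Iic y) y := by
    by_cases h : ∃ z ∈ s, z < y
    · obtain ⟨z, hz, hzy⟩ := h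
      refine (hg.continuousWithinAt_left_of_image_mem_nhdsWithin
        (mem_of_superset (Icc_mem_nhdsLE hzy) (hs.out hz hy)) ?_).mono inter_subset_right
      exact mem_of_superset (Icc_mem_nhdsLE (hg hz hy hzy))
        (himg.out (mem_image_of_mem g hz) (mem_image_of_mem g hy))
    · push Not at h
      exact continuousWithinAt_singleton.mono fun z hz => le_antisymm hz.2 (h z hz.1)
  exact (left.union right).mono fun z hz => (le_total z y).imp (⟨hz, ·⟩) (⟨hz, ·⟩)

theorem StrictMonoOn.continuousOn_invFunOn [DenselyOrdered α] [Nonempty α] {g : α → β} {s : Set α}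
    (hs : s.OrdConnected) (hg : StrictMonoOn g s) (himg : (g '' s).OrdConnected) :
    ContinuousOn (Function.invFunOn g s) (g '' s) := by
  have hinv : StrictMonoOn (Function.invFunOn g s) (g '' s) := by
    rintro _ ⟨x, hx, rfl⟩ _ ⟨y, hy, rfl⟩ hxy
    rw [hg.injOn.leftInvOn_invFunOn hx, hg.injOn.leftInvOn_invFunOn hy]
    exact (hg.lt_iff_lt hx hy).1 hxy
  exact hinv.continuousOn_of_image_ordConnected himg (by rwa [hg.injOn.invFunOn_image subset_rfl])

end MonotoneContinuity

theorem HasDerivWithinAt.eventually_nhdsGT_lt {g : ℝ → ℝ} {g' x : ℝ}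
    (h : HasDerivWithinAt g g' (Ioi x) x) (hg' : g' < 0) : ∀ᶠ z in 𝓝[>] x, g z < g x := by
  filter_upwards [h.limsup_slope_le' (lt_irrefl x) hg', self_mem_nhdsWithin] with z hz hxz
  exact (slope_neg_iff_of_le (le_of_lt hxz)).1 hz

theorem HasDerivWithinAt.eventually_nhdsLT_gt {g : ℝ → ℝ} {g' x : ℝ}
    (h : HasDerivWithinAt g g' (Iio x) x) (hg' : g' < 0) : ∀ᶠ z in 𝓝[<] x, g x < g z := by
  filter_upwards [h.limsup_slope_le' (lt_irrefl x) hg', self_mem_nhdsWithin] with z hz hzx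
  rw [slope_comm] at hz
  exact (slope_neg_iff_of_le (le_of_lt hzx)).1 hz

theorem neg_on_Ioc_of_deriv_neg_at_zeros {g : ℝ → ℝ} {c d : ℝ} (hg : ContinuousOn g (Ioc c d))
    (hc : ∀ᶠ t in 𝓝[>] c, g t < 0)
    (hzero : ∀ x ∈ Ioc c d, g x = 0 → ∃ g' < 0, HasDerivWithinAt g g' (Iio x) x) :
    ∀ x ∈ Ioc c d, g x < 0 := by
  obtain ⟨e, hce : c < e, he⟩ := mem_nhdsGT_iff_exists_Ioo_subset.1 hc
  by_contra! hbad
  obtain ⟨x, hx, hgx⟩ := hbad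
  have hex : e ≤ x := not_lt.1 fun hxe => (he ⟨hx.1, hxe⟩ : g x < 0).not_ge hgx
  obtain ⟨e', hce', he'⟩ := exists_between hce
  have hsub : Icc e' x ⊆ Ioc c d := fun t ht => ⟨hce'.trans_le ht.1, ht.2.trans hx.2⟩
  have hS : IsCompact (Icc e' x ∩ g ⁻¹' Ici 0) :=
    isCompact_Icc.of_isClosed_subset
      ((hg.mono hsub).preimage_isClosed_of_isClosed isClosed_Icc isClosed_Ici) inter_subset_left
  obtain ⟨x₀, ⟨hx₀, hgx₀⟩, hleast⟩ :=
    hS.exists_isLeast ⟨x, ⟨⟨by linarith, le_rfl⟩, hgx⟩⟩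
  have hx₀c : c < x₀ := hce'.trans_le hx₀.1
  have hleft : ∀ᶠ t in 𝓝[<] x₀, g t < 0 := by
    filter_upwards [Ioo_mem_nhdsLT hx₀c] with t ht
    by_cases hte : t < e
    · exact he ⟨ht.1, hte⟩
    · exact not_le.1 fun h0 =>
        (hleast ⟨⟨by linarith, ht.2.le.trans hx₀.2⟩, h0⟩).not_gt ht.2
  have hcont : Tendsto g (𝓝[<] x₀) (𝓝 (g x₀)) :=
    (hg x₀ (hsub hx₀)).tendsto.mono_left <| by
      rw [← nhdsWithin_Ioo_eq_nhdsLT hx₀c]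
      exact nhdsWithin_mono _ fun t ht => ⟨ht.1, ht.2.le.trans (hsub hx₀).2⟩
  have hzero₀ : g x₀ = 0 := le_antisymm (le_of_tendsto hcont (hleft.mono fun _ => le_of_lt)) hgx₀
  obtain ⟨g', hg', hderiv⟩ := hzero x₀ (hsub hx₀) hzero₀
  obtain ⟨t, ht₁, ht₂⟩ := ((hderiv.eventually_nhdsLT_gt hg').and hleft).exists
  linarith

/-- `φ_p(s) = |s|^{p-2} s`; the equation reads `(φ_p(f'))' + f - |f'|^{p-1} = 0`. -/
noncomputable def phiP (p x : ℝ) : ℝ := |x| ^ (p - 2) * x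

section PhiP

variable {p x : ℝ}

@[simp] theorem phiP_zero : phiP p 0 = 0 := by simp [phiP]

theorem phiP_eq_zero_iff : phiP p x = 0 ↔ x = 0 := by
  rcases eq_or_ne x 0 with rfl | hx
  · simp
  · simp [phiP, hx, (Real.rpow_pos_of_pos (abs_pos.2 hx) _).ne']

theorem phiP_neg_iff : phiP p x < 0 ↔ x < 0 := by
  rcases eq_or_ne x 0 with rfl | hx
  · simp
  · have hpos := Real.rpow_pos_of_pos (abs_pos.2 hx) (p - 2)
    simp [phiP, mul_neg_iff, hpos, hpos.not_gt]

theorem abs_phiP (hp : p ≠ 1) : |phiP p x| = |x| ^ (p - 1) := by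
  rw [phiP, abs_mul, abs_of_nonneg (Real.rpow_nonneg (abs_nonneg x) _),
    show p - 1 = (p - 2) + 1 by ring, Real.rpow_add' (abs_nonneg x) (by contrapose! hp; linarith),
    Real.rpow_one]

theorem phiP_of_neg (hp : p ≠ 1) (hx : x < 0) : phiP p x = -|x| ^ (p - 1) := by
  rw [← abs_phiP hp, abs_of_neg (phiP_neg_iff.2 hx), neg_neg]

theorem abs_phiP_rpow_conj (hp : 1 < p) : |phiP p x| ^ (p / (p - 1)) = |x| ^ p := by
  rw [abs_phiP hp.ne', ← Real.rpow_mul (abs_nonneg x), mul_div_cancel₀ _ (by linarith)]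

theorem phiP_conj_phiP (hp : 1 < p) : phiP (p / (p - 1)) (phiP p x) = x := by
  rcases eq_or_ne x 0 with rfl | hx
  · simp
  rw [phiP, abs_phiP hp.ne', ← Real.rpow_mul (abs_nonneg x), phiP, ← mul_assoc,
    ← Real.rpow_add (abs_pos.2 hx)]
  have : (p - 1) * (p / (p - 1) - 2) + (p - 2) = 0 := by
    have : p - 1 ≠ 0 := by linarith
    field_simp; ring
  rw [this, Real.rpow_zero, one_mul]

end PhiP

/-- The set `[0, R)` of radii before the first positive zero of `f` (all of `[0, ∞)` if there is
none). -/
def extDomain (f : ℝ → ℝ) : Set ℝ := {r : ℝ | 0 ≤ r ∧ (r : EReal) < extTime f}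

section ExtTime

variable {f : ℝ → ℝ} {r t R : ℝ}

theorem mem_extDomain_of_le (hr : r ∈ extDomain f) (ht : 0 ≤ t) (htr : t ≤ r) :
    t ∈ extDomain f :=
  ⟨ht, (EReal.coe_le_coe_iff.2 htr).trans_lt hr.2⟩

theorem extDomain_ordConnected : (extDomain f).OrdConnected :=
  ⟨fun _ hx _ hy _ ht => mem_extDomain_of_le hy (hx.1.trans ht.1) ht.2⟩

theorem ne_zero_of_mem_extDomain (hr : r ∈ extDomain f) (hr0 : 0 < r) : f r ≠ 0 :=
  fun hfr => (sInf_le ⟨r, hr0, hfr, rfl⟩ : extTime f ≤ r).not_gt hr.2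

theorem extTime_eq_top (h : {r : ℝ | 0 < r ∧ f r = 0} = ∅) : extTime f = ⊤ :=
  sInf_eq_top.2 fun _ ⟨_, hr0, hfr, _⟩ => (h.subset ⟨hr0, hfr⟩).elim

theorem extTime_eq_of_isLeast (h : IsLeast {r : ℝ | 0 < r ∧ f r = 0} R) : extTime f = R :=
  le_antisymm (sInf_le ⟨R, h.1.1, h.1.2, rfl⟩)
    (le_sInf <| by
      rintro _ ⟨r, hr0, hfr, rfl⟩
      exact EReal.coe_le_coe_iff.2 (h.2 ⟨hr0, hfr⟩))

end ExtTime

theorem rpow_two_sub_eq_div {a : ℝ} (ha : 0 < a) (p : ℝ) : a ^ (2 - p) = a / a ^ (p - 1) := by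
  rw [show 2 - p = 1 - (p - 1) by ring, Real.rpow_sub ha, Real.rpow_one]

/-- The radius `r ∈ [0, R)` at which `f r = a (1 - y)`. -/
noncomputable def radiusAt (a : ℝ) (f : ℝ → ℝ) : ℝ → ℝ :=
  Function.invFunOn (fun r => 1 - f r / a) (extDomain f)

noncomputable def phasePsi (p a : ℝ) (f fd : ℝ → ℝ) (y : ℝ) : ℝ :=
  |fd (radiusAt a f y)| ^ p / a ^ p

/-- By the chain rule,
`ψ'(1 - f/a) · (-f'/a) = (|φ_p(f')|^{p/(p-1)})' / a^p = (p/(p-1)) f' (φ_p(f'))' / a^p`. -/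
noncomputable def phasePsiDeriv (p a : ℝ) (f gd : ℝ → ℝ) (y : ℝ) : ℝ :=
  -(p / (p - 1)) * gd (radiusAt a f y) / a ^ (p - 1)

namespace IsSol

variable {p a : ℝ} {f fd gd : ℝ → ℝ} {r y : ℝ}

theorem f_zero (hf : IsSol p a f fd gd) : f 0 = a := hf.2.2.2.2.2.1

theorem fd_zero (hf : IsSol p a f fd gd) : fd 0 = 0 := hf.2.2.2.2.2.2

theorem continuousOn_fd (hf : IsSol p a f fd gd) : ContinuousOn fd (Ici 0) := hf.2.1

theorem continuousOn_gd (hf : IsSol p a f fd gd) : ContinuousOn gd (Ici 0) := hf.2.2.2.1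

theorem continuousOn (hf : IsSol p a f fd gd) : ContinuousOn f (Ici 0) :=
  fun r hr => (hf.1 r hr).continuousWithinAt

theorem hasDerivAt (hf : IsSol p a f fd gd) (hr : 0 < r) : HasDerivAt f (fd r) r :=
  (hf.1 r hr.le).hasDerivAt (Ici_mem_nhds hr)

theorem hasDerivWithinAt_flux (hf : IsSol p a f fd gd) (hr : 0 ≤ r) :
    HasDerivWithinAt (fun s => phiP p (fd s)) (gd r) (Ici 0) r :=
  hf.2.2.1 r hr

theorem hasDerivAt_flux (hf : IsSol p a f fd gd) (hr : 0 < r) :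
    HasDerivAt (fun s => phiP p (fd s)) (gd r) r :=
  (hf.hasDerivWithinAt_flux hr.le).hasDerivAt (Ici_mem_nhds hr)

theorem gd_eq (hf : IsSol p a f fd gd) (hr : 0 < r) : gd r = |fd r| ^ (p - 1) - f r := by
  linarith [hf.2.2.2.2.1 r hr]

theorem gd_zero (hf : IsSol p a f fd gd) (hp : 1 < p) : gd 0 = -a := by
  have hrhs : ContinuousWithinAt (fun r => |fd r| ^ (p - 1) - f r) (Ioi 0) 0 :=
    (((hf.continuousOn_fd 0 self_mem_Ici).abs.rpow_const (Or.inr (by linarith))).sub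
      (hf.continuousOn 0 self_mem_Ici)).mono Ioi_subset_Ici_self
  have hlim := hrhs.tendsto.congr' (eventuallyEq_nhdsWithin_of_eqOn fun r hr => (hf.gd_eq hr).symm)
  rw [tendsto_nhds_unique ((hf.continuousOn_gd 0 self_mem_Ici).mono Ioi_subset_Ici_self).tendsto
    hlim, hf.fd_zero, hf.f_zero, abs_zero, Real.zero_rpow (by linarith), zero_sub]

theorem pos_of_forall_ne_zero (hf : IsSol p a f fd gd) (ha : 0 < a)
    (hne : ∀ t ∈ Ioc 0 r, f t ≠ 0) : ∀ t ∈ Ioc 0 r, 0 < f t := by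
  intro t ht
  by_contra! hneg
  obtain ⟨z, hz, hfz⟩ := intermediate_value_Ioo' ht.1.le (hf.continuousOn.mono Icc_subset_Ici_self)
    ⟨(hneg.lt_of_ne (hne t ht)), hf.f_zero ▸ ha⟩
  exact hne z ⟨hz.1, hz.2.le.trans ht.2⟩ hfz

theorem deriv_neg_of_pos (hf : IsSol p a f fd gd) (hp : 1 < p) (ha : 0 < a)
    (hpos : ∀ t ∈ Ioc 0 r, 0 < f t) : ∀ t ∈ Ioc 0 r, fd t < 0 := by
  refine fun t ht => phiP_neg_iff.1 (neg_on_Ioc_of_deriv_neg_at_zeros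
    (fun x hx => (hf.hasDerivWithinAt_flux hx.1.le).continuousWithinAt.mono fun y hy => hy.1.le)
    ?_ (fun x hx hx0 => ⟨gd x, ?_, (hf.hasDerivAt_flux hx.1).hasDerivWithinAt⟩) t ht)
  · simpa [hf.fd_zero] using ((hf.hasDerivWithinAt_flux le_rfl).mono Ioi_subset_Ici_self)
      |>.eventually_nhdsGT_lt (by rw [hf.gd_zero hp]; linarith)
  · rw [hf.gd_eq hx.1, phiP_eq_zero_iff.1 hx0, abs_zero, Real.zero_rpow (by linarith)]
    linarith [hpos x hx]

theorem pos_of_mem_extDomain (hf : IsSol p a f fd gd) (ha : 0 < a) (hr : r ∈ extDomain f)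
    (hr0 : 0 < r) : 0 < f r :=
  hf.pos_of_forall_ne_zero ha (fun _ ht => ne_zero_of_mem_extDomain
    (mem_extDomain_of_le hr ht.1.le ht.2) ht.1) r ⟨hr0, le_rfl⟩

theorem deriv_neg_of_mem_extDomain (hf : IsSol p a f fd gd) (hp : 1 < p) (ha : 0 < a)
    (hr : r ∈ extDomain f) (hr0 : 0 < r) : fd r < 0 :=
  hf.deriv_neg_of_pos hp ha (fun _ ht => hf.pos_of_mem_extDomain ha
    (mem_extDomain_of_le hr ht.1.le ht.2) ht.1) r ⟨hr0, le_rfl⟩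

theorem strictAntiOn_extDomain (hf : IsSol p a f fd gd) (hp : 1 < p) (ha : 0 < a) :
    StrictAntiOn f (extDomain f) := by
  refine strictAntiOn_of_deriv_neg extDomain_ordConnected.convex
    (hf.continuousOn.mono fun r hr => hr.1) fun x hx => ?_
  have hx0 : 0 < x := by
    have := interior_mono (show extDomain f ⊆ Ici 0 from fun r hr => hr.1) hx
    rwa [interior_Ici] at this
  rw [(hf.hasDerivAt hx0).deriv]
  exact hf.deriv_neg_of_mem_extDomain hp ha (interior_subset hx) hx0

/-- `(φ_p(f') + L) e^r` is nonincreasing, as `(φ_p(f'))' + φ_p(f') = -f ≤ -L` while `f' < 0`. -/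
theorem flux_le_of_le (hf : IsSol p a f fd gd) (hp : 1 < p) {L : ℝ} (hL : ∀ r > 0, L ≤ f r)
    (hneg : ∀ r > 0, fd r < 0) {t : ℝ} (ht : 1 ≤ t) :
    phiP p (fd t) ≤ -L + (phiP p (fd 1) + L) * Real.exp (1 - t) := by
  have hw : ∀ r > 0, HasDerivAt (fun r => (phiP p (fd r) + L) * Real.exp r)
      ((L - f r) * Real.exp r) r := by
    intro r hr
    refine (((hf.hasDerivAt_flux hr).add_const L).mul (Real.hasDerivAt_exp r)).congr_deriv ?_
    rw [hf.gd_eq hr, phiP_of_neg hp.ne' (hneg r hr)]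
    ring
  have hanti : AntitoneOn (fun r => (phiP p (fd r) + L) * Real.exp r) (Ioi 0) := by
    refine antitoneOn_of_deriv_nonpos (convex_Ioi 0)
      (fun r hr => (hw r hr).continuousAt.continuousWithinAt) ?_ ?_ <;> rw [interior_Ioi]
    · exact fun r hr => (hw r hr).differentiableAt.differentiableWithinAt
    · intro r hr
      rw [(hw r hr).deriv]
      exact mul_nonpos_of_nonpos_of_nonneg (by linarith [hL r hr]) (Real.exp_pos r).le
  have h1 := (le_div_iff₀ (Real.exp_pos t)).2
    (hanti (mem_Ioi.2 one_pos) (mem_Ioi.2 (by linarith)) ht)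
  rw [Real.exp_sub, ← mul_div_assoc]
  linarith

theorem eventually_deriv_le (hf : IsSol p a f fd gd) (hp : 1 < p) {L : ℝ} (hL0 : 0 < L)
    (hL : ∀ r > 0, L ≤ f r) (hneg : ∀ r > 0, fd r < 0) :
    ∀ᶠ t in atTop, fd t ≤ -(L / 2) ^ (p - 1)⁻¹ := by
  have hexp : Tendsto (fun t : ℝ => Real.exp (1 - t)) atTop (𝓝 0) := by
    simpa [Real.exp_sub, div_eq_mul_inv] using
      (tendsto_inv_atTop_zero.comp Real.tendsto_exp_atTop).const_mul (Real.exp 1)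
  have hlim : Tendsto (fun t => -L + (phiP p (fd 1) + L) * Real.exp (1 - t)) atTop (𝓝 (-L)) := by
    simpa using tendsto_const_nhds.add (tendsto_const_nhds.mul hexp)
  filter_upwards [hlim.eventually (gt_mem_nhds (by linarith : -L < -L / 2)),
    eventually_ge_atTop 1] with t ht ht1
  have hfd := hneg t (by linarith)
  have hflux := (hf.flux_le_of_le hp hL hneg ht1).trans ht.le
  rw [phiP_of_neg hp.ne' hfd] at hflux
  have hle : (L / 2) ^ (p - 1)⁻¹ ≤ |fd t| :=
    (Real.rpow_inv_le_iff_of_pos (by positivity) (abs_nonneg _) (by linarith)).2 (by linarith)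
  rw [abs_of_neg hfd] at hle
  linarith

theorem exists_lt_of_deriv_neg (hf : IsSol p a f fd gd) (hp : 1 < p) (hpos : ∀ r > 0, 0 < f r)
    (hneg : ∀ r > 0, fd r < 0) {ε : ℝ} (hε : 0 < ε) : ∃ r > 0, f r < ε := by
  by_contra! hL
  set c := (ε / 2) ^ (p - 1)⁻¹
  have hc : 0 < c := by positivity
  obtain ⟨T, hT⟩ := eventually_atTop.1
    ((hf.eventually_deriv_le hp hε hL hneg).and (eventually_gt_atTop 0))
  have hT0 := (hT T le_rfl).2
  have hlen : 0 < f T / c + 1 := by have := hpos T hT0; positivity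
  obtain ⟨ξ, hξ, hslope⟩ := exists_hasDerivAt_eq_slope f fd (lt_add_of_pos_right T hlen)
    (hf.continuousOn.mono fun x hx => hT0.le.trans hx.1)
    (fun x hx => hf.hasDerivAt (hT0.trans hx.1))
  have hdrop := (hT ξ hξ.1.le).1
  rw [hslope, add_sub_cancel_left, div_le_iff₀ hlen] at hdrop
  have : -c * (f T / c + 1) = -f T - c := by field_simp; ring
  linarith [hpos (T + (f T / c + 1)) (by linarith)]

theorem tendsto_atTop_zero (hf : IsSol p a f fd gd) (hp : 1 < p) (ha : 0 < a)
    (hZ : {r : ℝ | 0 < r ∧ f r = 0} = ∅) : Tendsto f atTop (𝓝 0) := by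
  have hD : ∀ r, 0 ≤ r → r ∈ extDomain f := fun r hr =>
    ⟨hr, by rw [extTime_eq_top hZ]; exact EReal.coe_lt_top r⟩
  have hpos : ∀ r > 0, 0 < f r := fun r hr => hf.pos_of_mem_extDomain ha (hD r hr.le) hr
  refine tendsto_order.2 ⟨fun b hb => ?_, fun ε hε => ?_⟩
  · filter_upwards [eventually_gt_atTop 0] with r hr using hb.trans (hpos r hr)
  · obtain ⟨r, hr, hfr⟩ := hf.exists_lt_of_deriv_neg hp hpos
      (fun r hr => hf.deriv_neg_of_mem_extDomain hp ha (hD r hr.le) hr) hε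
    filter_upwards [eventually_ge_atTop r] with t ht
    exact ((hf.strictAntiOn_extDomain hp ha).antitoneOn (hD r hr.le) (hD t (hr.le.trans ht))
      ht).trans_lt hfr

theorem isLeast_zeros (hf : IsSol p a f fd gd) (ha : 0 < a)
    (hZ : {r : ℝ | 0 < r ∧ f r = 0}.Nonempty) :
    IsLeast {r : ℝ | 0 < r ∧ f r = 0} (sInf {r : ℝ | 0 < r ∧ f r = 0}) := by
  have hbdd : BddBelow {r : ℝ | 0 < r ∧ f r = 0} := ⟨0, fun r hr => hr.1.le⟩
  obtain ⟨h0, hfR⟩ := (hf.continuousOn.preimage_isClosed_of_isClosed isClosed_Ici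
    isClosed_singleton).closure_subset_iff.2 (fun r hr => ⟨hr.1.le, hr.2⟩)
    (csInf_mem_closure hZ hbdd)
  refine ⟨⟨h0.lt_of_ne fun h => ?_, hfR⟩, fun r hr => csInf_le hbdd hr⟩
  rw [mem_preimage, ← h, hf.f_zero, mem_singleton_iff] at hfR
  exact ha.ne' hfR

theorem tendsto_nhdsLT_sInf_zeros (hf : IsSol p a f fd gd) (ha : 0 < a)
    (hZ : {r : ℝ | 0 < r ∧ f r = 0}.Nonempty) :
    Tendsto f (𝓝[<] (sInf {r : ℝ | 0 < r ∧ f r = 0})) (𝓝 0) := by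
  obtain ⟨⟨hR, hfR⟩, -⟩ := hf.isLeast_zeros ha hZ
  have : Tendsto f (𝓝[<] (sInf {r : ℝ | 0 < r ∧ f r = 0})) (𝓝 (f (sInf {r | 0 < r ∧ f r = 0}))) :=
    (hf.hasDerivAt hR).continuousAt.tendsto.mono_left nhdsWithin_le_nhds
  rwa [hfR] at this

theorem exists_mem_extDomain_lt (hf : IsSol p a f fd gd) (hp : 1 < p) (ha : 0 < a) {ε : ℝ}
    (hε : 0 < ε) : ∃ r ∈ extDomain f, f r < ε := by
  rcases eq_empty_or_nonempty {r : ℝ | 0 < r ∧ f r = 0} with hZ | hZ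
  · obtain ⟨r, hfr, hr⟩ :=
      ((hf.tendsto_atTop_zero hp ha hZ).eventually (gt_mem_nhds hε)).and
        (eventually_ge_atTop 0) |>.exists
    exact ⟨r, ⟨hr, by rw [extTime_eq_top hZ]; exact EReal.coe_lt_top r⟩, hfr⟩
  · have hR := hf.isLeast_zeros ha hZ
    obtain ⟨r, hfr, hr⟩ := ((hf.tendsto_nhdsLT_sInf_zeros ha hZ).eventually (gt_mem_nhds hε)).and
      (Ioo_mem_nhdsLT hR.1.1) |>.exists
    exact ⟨r, ⟨hr.1.le, by rw [extTime_eq_of_isLeast hR]; exact EReal.coe_lt_coe_iff.2 hr.2⟩, hfr⟩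

theorem zero_mem_extDomain (hf : IsSol p a f fd gd) (hp : 1 < p) (ha : 0 < a) :
    0 ∈ extDomain f :=
  let ⟨_, hr, _⟩ := hf.exists_mem_extDomain_lt hp ha one_pos
  mem_extDomain_of_le hr le_rfl hr.1

theorem image_extDomain (hf : IsSol p a f fd gd) (hp : 1 < p) (ha : 0 < a) :
    f '' extDomain f = Ioc 0 a := by
  ext y
  constructor
  · rintro ⟨r, hr, rfl⟩
    rcases hr.1.eq_or_lt with rfl | hr0
    · rw [hf.f_zero]
      exact ⟨ha, le_rfl⟩
    · refine ⟨hf.pos_of_mem_extDomain ha hr hr0, ?_⟩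
      rw [← hf.f_zero]
      exact (hf.strictAntiOn_extDomain hp ha (hf.zero_mem_extDomain hp ha) hr hr0).le
  · rintro ⟨hy0, hya⟩
    obtain ⟨r, hr, hfr⟩ := hf.exists_mem_extDomain_lt hp ha hy0
    obtain ⟨t, ht, rfl⟩ := intermediate_value_Icc' hr.1
      (hf.continuousOn.mono Icc_subset_Ici_self) ⟨hfr.le, hf.f_zero ▸ hya⟩
    exact ⟨t, mem_extDomain_of_le hr ht.1 ht.2, rfl⟩

theorem image_extDomain_normalized (hf : IsSol p a f fd gd) (hp : 1 < p) (ha : 0 < a) :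
    (fun r => 1 - f r / a) '' extDomain f = Ico 0 1 := by
  rw [show (fun r => 1 - f r / a) = (fun t => 1 - t / a) ∘ f from rfl, image_comp,
    hf.image_extDomain hp ha]
  ext y
  constructor
  · rintro ⟨t, ⟨ht0, hta⟩, rfl⟩
    have h1 : t / a ≤ 1 := (div_le_one ha).2 hta
    have h2 : 0 < t / a := div_pos ht0 ha
    exact ⟨by linarith, by linarith⟩
  · rintro ⟨hy0, hy1⟩
    refine ⟨a * (1 - y), ⟨mul_pos ha (by linarith), by nlinarith⟩, ?_⟩
    field_simp
    ring

theorem strictMonoOn_normalized (hf : IsSol p a f fd gd) (hp : 1 < p) (ha : 0 < a) :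
    StrictMonoOn (fun r => 1 - f r / a) (extDomain f) := fun x hx y hy hxy => by
  have := div_lt_div_of_pos_right (hf.strictAntiOn_extDomain hp ha hx hy hxy) ha
  simp only
  linarith

theorem radiusAt_spec (hf : IsSol p a f fd gd) (hp : 1 < p) (ha : 0 < a) (hy : y ∈ Ico 0 1) :
    radiusAt a f y ∈ extDomain f ∧ 1 - f (radiusAt a f y) / a = y :=
  Function.invFunOn_pos <| by rwa [← hf.image_extDomain_normalized hp ha] at hy

theorem radiusAt_normalized (hf : IsSol p a f fd gd) (hp : 1 < p) (ha : 0 < a)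
    (hr : r ∈ extDomain f) : radiusAt a f (1 - f r / a) = r :=
  (hf.strictMonoOn_normalized hp ha).injOn.leftInvOn_invFunOn hr

theorem continuousOn_radiusAt (hf : IsSol p a f fd gd) (hp : 1 < p) (ha : 0 < a) :
    ContinuousOn (radiusAt a f) (Ico 0 1) := by
  have himg := hf.image_extDomain_normalized hp ha
  rw [← himg]
  exact (hf.strictMonoOn_normalized hp ha).continuousOn_invFunOn extDomain_ordConnected
    (himg ▸ ordConnected_Ico)

theorem radiusAt_zero (hf : IsSol p a f fd gd) (hp : 1 < p) (ha : 0 < a) :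
    radiusAt a f 0 = 0 := by
  have := hf.radiusAt_normalized hp ha (hf.zero_mem_extDomain hp ha)
  rwa [hf.f_zero, div_self ha.ne', sub_self] at this

theorem radiusAt_pos (hf : IsSol p a f fd gd) (hp : 1 < p) (ha : 0 < a) (hy : y ∈ Ioo 0 1) :
    0 < radiusAt a f y := by
  obtain ⟨hD, hY⟩ := hf.radiusAt_spec hp ha (Ioo_subset_Ico_self hy)
  refine hD.1.lt_of_ne fun h => hy.1.ne ?_
  rwa [← h, hf.f_zero, div_self ha.ne', sub_self] at hY

theorem deriv_neg_radiusAt (hf : IsSol p a f fd gd) (hp : 1 < p) (ha : 0 < a)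
    (hy : y ∈ Ioo 0 1) : fd (radiusAt a f y) < 0 :=
  hf.deriv_neg_of_mem_extDomain hp ha (hf.radiusAt_spec hp ha (Ioo_subset_Ico_self hy)).1
    (hf.radiusAt_pos hp ha hy)

theorem phasePsi_normalized (hf : IsSol p a f fd gd) (hp : 1 < p) (ha : 0 < a)
    (hr : r ∈ extDomain f) : phasePsi p a f fd (1 - f r / a) = |fd r| ^ p / a ^ p := by
  rw [phasePsi, hf.radiusAt_normalized hp ha hr]

theorem hasDerivAt_phasePsi (hf : IsSol p a f fd gd) (hp : 1 < p) (ha : 0 < a)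
    (hy : y ∈ Ioo 0 1) : HasDerivAt (phasePsi p a f fd) (phasePsiDeriv p a f gd y) y := by
  set r := radiusAt a f y
  have hr0 : 0 < r := hf.radiusAt_pos hp ha hy
  have hfd : fd r < 0 := hf.deriv_neg_radiusAt hp ha hy
  have hq : 1 < p / (p - 1) := by rw [one_lt_div (by linarith)]; linarith
  have hradius : HasDerivAt (radiusAt a f) (-(fd r / a))⁻¹ y :=
    HasDerivAt.of_local_left_inverse
      ((hf.continuousOn_radiusAt hp ha).continuousAt (Ico_mem_nhds hy.1 hy.2))
      (((hf.hasDerivAt hr0).div_const a).const_sub 1) (neg_ne_zero.2 (div_ne_zero hfd.ne ha.ne'))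
      (by filter_upwards [Ico_mem_nhds hy.1 hy.2] with z hz using (hf.radiusAt_spec hp ha hz).2)
  have hpsi : phasePsi p a f fd =
      (fun s => |phiP p (fd s)| ^ (p / (p - 1)) / a ^ p) ∘ radiusAt a f := by
    funext z
    simp only [phasePsi, Function.comp, abs_phiP_rpow_conj hp]
  have houter := ((hasDerivAt_abs_rpow (phiP p (fd r)) hq).comp r
    (hf.hasDerivAt_flux hr0)).div_const (a ^ p)
  rw [hpsi]
  refine (houter.comp y hradius).congr_deriv ?_
  rw [mul_assoc (p / (p - 1)), ← phiP, phiP_conj_phiP hp, phasePsiDeriv,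
    show a ^ p = a ^ (p - 1) * a by rw [← Real.rpow_add_one ha.ne']; ring_nf]
  have : a ^ (p - 1) ≠ 0 := (Real.rpow_pos_of_pos ha _).ne'
  have : fd r ≠ 0 := hfd.ne
  field_simp
  rfl

theorem continuousOn_phasePsi (hf : IsSol p a f fd gd) (hp : 1 < p) (ha : 0 < a) :
    ContinuousOn (phasePsi p a f fd) (Ico 0 1) :=
  (((hf.continuousOn_fd.comp (hf.continuousOn_radiusAt hp ha)
    fun _ hy => (hf.radiusAt_spec hp ha hy).1.1).abs.rpow_const
    fun _ _ => Or.inr (by linarith)).div_const _)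

theorem continuousOn_phasePsiDeriv (hf : IsSol p a f fd gd) (hp : 1 < p) (ha : 0 < a) :
    ContinuousOn (phasePsiDeriv p a f gd) (Ico 0 1) :=
  (continuousOn_const.mul (hf.continuousOn_gd.comp (hf.continuousOn_radiusAt hp ha)
    fun _ hy => (hf.radiusAt_spec hp ha hy).1.1)).div_const _

theorem hasDerivWithinAt_phasePsi (hf : IsSol p a f fd gd) (hp : 1 < p) (ha : 0 < a)
    (hy : y ∈ Ico 0 1) :
    HasDerivWithinAt (phasePsi p a f fd) (phasePsiDeriv p a f gd y) (Ico 0 1) y := by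
  rcases hy.1.eq_or_lt with rfl | hy0
  · have hderiv : Tendsto (deriv (phasePsi p a f fd)) (𝓝[>] 0)
        (𝓝 (phasePsiDeriv p a f gd 0)) := by
      rw [← nhdsWithin_Ioo_eq_nhdsGT one_pos]
      exact ((hf.continuousOn_phasePsiDeriv hp ha 0 hy).mono Ioo_subset_Ico_self).tendsto.congr'
        (eventuallyEq_nhdsWithin_of_eqOn fun z hz => (hf.hasDerivAt_phasePsi hp ha hz).deriv.symm)
    exact (hasDerivWithinAt_Ici_of_tendsto_deriv
      (fun z hz => (hf.hasDerivAt_phasePsi hp ha hz).differentiableAt.differentiableWithinAt)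
      ((hf.continuousOn_phasePsi hp ha 0 hy).mono Ioo_subset_Ico_self) (Ioo_mem_nhdsGT one_pos)
      hderiv).mono Ico_subset_Ici_self
  · exact (hf.hasDerivAt_phasePsi hp ha ⟨hy0, hy.2⟩).hasDerivWithinAt

theorem phasePsi_pos (hf : IsSol p a f fd gd) (hp : 1 < p) (ha : 0 < a) (hy : y ∈ Ioo 0 1) :
    0 < phasePsi p a f fd y :=
  div_pos (Real.rpow_pos_of_pos (abs_pos.2 (hf.deriv_neg_radiusAt hp ha hy).ne) _)
    (Real.rpow_pos_of_pos ha _)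

theorem phasePsi_zero (hf : IsSol p a f fd gd) (hp : 1 < p) (ha : 0 < a) :
    phasePsi p a f fd 0 = 0 := by
  rw [phasePsi, hf.radiusAt_zero hp ha, hf.fd_zero, abs_zero, Real.zero_rpow (by linarith),
    zero_div]

theorem phasePsiDeriv_add (hf : IsSol p a f fd gd) (hp : 1 < p) (ha : 0 < a)
    (hy : y ∈ Ioo 0 1) :
    phasePsiDeriv p a f gd y + (p / (p - 1)) * phasePsi p a f fd y ^ ((p - 1) / p) =
      (p * a ^ (2 - p) / (p - 1)) * (1 - y) := by
  obtain ⟨-, hY⟩ := hf.radiusAt_spec hp ha (Ioo_subset_Ico_self hy)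
  have hfr : f (radiusAt a f y) = a * (1 - y) := by
    have : f (radiusAt a f y) / a = 1 - y := by linarith
    rw [div_eq_iff ha.ne'] at this
    linarith
  have hpow : phasePsi p a f fd y ^ ((p - 1) / p) =
      |fd (radiusAt a f y)| ^ (p - 1) / a ^ (p - 1) := by
    rw [phasePsi, Real.div_rpow (by positivity) (by positivity), ← Real.rpow_mul (abs_nonneg _),
      ← Real.rpow_mul ha.le, mul_div_cancel₀ _ (by linarith : p ≠ 0)]
  rw [phasePsiDeriv, hpow, hf.gd_eq (hf.radiusAt_pos hp ha hy), hfr, rpow_two_sub_eq_div ha]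
  have : a ^ (p - 1) ≠ 0 := (Real.rpow_pos_of_pos ha _).ne'
  have : p - 1 ≠ 0 := by linarith
  field_simp
  ring

theorem phasePsiDeriv_zero (hf : IsSol p a f fd gd) (hp : 1 < p) (ha : 0 < a) :
    phasePsiDeriv p a f gd 0 = p * a ^ (2 - p) / (p - 1) := by
  rw [phasePsiDeriv, hf.radiusAt_zero hp ha, hf.gd_zero hp, rpow_two_sub_eq_div ha]
  ring

end IsSol

theorem stmt4 (p a : ℝ) (hp : p ∈ Set.Ioo (1:ℝ) 2) (ha : 0 < a)
    (f fd gd : ℝ → ℝ) (hf : IsSol p a f fd gd) :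
    ({r : ℝ | 0 < r ∧ f r = 0}.Nonempty →
      Tendsto f (𝓝[<] (sInf {r : ℝ | 0 < r ∧ f r = 0})) (𝓝 0)) ∧
    ({r : ℝ | 0 < r ∧ f r = 0} = ∅ → Tendsto f atTop (𝓝 0)) ∧
    StrictAntiOn f {r : ℝ | 0 ≤ r ∧ (r : EReal) < extTime f} ∧
    f '' {r : ℝ | 0 ≤ r ∧ (r : EReal) < extTime f} = Set.Ioc 0 a ∧
    ∃ ψ ψd : ℝ → ℝ,
      (∀ r : ℝ, 0 ≤ r → (r : EReal) < extTime f →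
        ψ (1 - f r / a) = |fd r| ^ p / a ^ p) ∧
      (∀ y ∈ Set.Ico (0:ℝ) 1, HasDerivWithinAt ψ (ψd y) (Set.Ico 0 1) y) ∧
      ContinuousOn ψd (Set.Ico 0 1) ∧
      (∀ y ∈ Set.Ico (0:ℝ) 1, 0 ≤ ψ y) ∧
      (∀ y ∈ Set.Ioo (0:ℝ) 1, 0 < ψ y) ∧
      ψ 0 = 0 ∧
      (∀ y ∈ Set.Ioo (0:ℝ) 1,
        ψd y + (p/(p-1)) * ψ y ^ ((p-1)/p) = (p * a ^ (2-p) / (p-1)) * (1-y)) ∧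
      ψd 0 = p * a ^ (2-p) / (p-1) ∧ 0 < ψd 0 := by
  have hp1 : 1 < p := hp.1
  refine ⟨hf.tendsto_nhdsLT_sInf_zeros ha, hf.tendsto_atTop_zero hp1 ha,
    hf.strictAntiOn_extDomain hp1 ha, hf.image_extDomain hp1 ha,
    phasePsi p a f fd, phasePsiDeriv p a f gd,
    fun r hr0 hrR => hf.phasePsi_normalized hp1 ha ⟨hr0, hrR⟩,
    fun y hy => hf.hasDerivWithinAt_phasePsi hp1 ha hy, hf.continuousOn_phasePsiDeriv hp1 ha,
    fun y _ => by unfold phasePsi; positivity, fun y hy => hf.phasePsi_pos hp1 ha hy,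
    hf.phasePsi_zero hp1 ha, fun y hy => hf.phasePsiDeriv_add hp1 ha hy,
    hf.phasePsiDeriv_zero hp1 ha, ?_⟩
  rw [hf.phasePsiDeriv_zero hp1 ha]
  exact div_pos (mul_pos (by linarith) (Real.rpow_pos_of_pos ha _)) (by linarith)
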